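/- The set of 4×4 complex matrices M that commute with both I₂⊗σ₁ + σ₁⊗I₂ and I₂⊗σ₂ + σ₂⊗I₂ is exactly the ℂ-linear span of I₂⊗I₂ and Ω⁺. -/

import Mathlib

open Matrix
open scoped Kronecker ComplexOrder

/-- The first Pauli matrix. -/
noncomputable def σ1 : Matrix (Fin 2) (Fin 2) ℂ := !![0, 1; 1, 0]

/-- The second Pauli matrix. -/
noncomputable def σ2 : Matrix (Fin 2) (Fin 2) ℂ := !![0, -Complex.I; Complex.I, 0]

/-- The third Pauli matrix. -/
noncomputable def σ3 : Matrix (Fin 2) (Fin 2) ℂ := !![1, 0; 0, -1]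

/-- The 2×2 identity matrix. -/
noncomputable def I2 : Matrix (Fin 2) (Fin 2) ℂ := 1

/-!
Write `S A = 1 ⊗ A + A ⊗ 1`. A matrix commuting with `S σ1` and `S σ2` also commutes with
`S σ3 = [S σ1, S σ2] / 2i`, which is diagonal with weights `2, 0, 0, -2`; so it preserves the
weight spaces, and commuting with `S σ1` then leaves only two free entries. The resulting
two-parameter family is spanned by `1` and the flip `P : x ⊗ y ↦ y ⊗ x`, and Dirac's identity
`Ω⁺ = 2P - 1` turns this into the span of `1` and `Ω⁺`. Conversely `P` commutes with every `S A`.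
-/

namespace Matrix

variable {R n : Type*} [DecidableEq n]

section CommSemiring

variable [CommSemiring R]

def kroneckerSum (A : Matrix n n R) : Matrix (n × n) (n × n) R := 1 ⊗ₖ A + A ⊗ₖ 1

def flipMatrix : Matrix (n × n) (n × n) R := (Equiv.prodComm n n).toPEquiv.toMatrix

theorem flipMatrix_apply (i j : n × n) : (flipMatrix i j : R) = if j = i.swap then 1 else 0 := by
  simp [flipMatrix, PEquiv.toMatrix_apply, eq_comm]

theorem flipMatrix_mul_kronecker [Fintype n] (A B : Matrix n n R) :
    flipMatrix * (A ⊗ₖ B) = (B ⊗ₖ A) * flipMatrix := by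
  ext i j
  simp [flipMatrix, PEquiv.toMatrix_toPEquiv_mul, PEquiv.mul_toMatrix_toPEquiv, mul_comm]

theorem commute_flipMatrix_kroneckerSum [Fintype n] (A : Matrix n n R) :
    Commute flipMatrix (kroneckerSum A) := by
  rw [Commute, SemiconjBy, kroneckerSum, mul_add, add_mul, flipMatrix_mul_kronecker,
    flipMatrix_mul_kronecker, add_comm]

theorem kroneckerSum_diagonal (d : n → R) :
    kroneckerSum (diagonal d) = diagonal fun p => d p.1 + d p.2 := by
  rw [kroneckerSum, ← diagonal_one, diagonal_kronecker_diagonal, diagonal_kronecker_diagonal,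
    diagonal_add]
  simp [add_comm]

end CommSemiring

section CommRing

variable [CommRing R] [Fintype n]

theorem kroneckerSum_commutator (A B : Matrix n n R) :
    kroneckerSum A * kroneckerSum B - kroneckerSum B * kroneckerSum A =
      kroneckerSum (A * B - B * A) := by
  simp only [kroneckerSum, add_mul, mul_add, ← mul_kronecker_mul, one_mul, mul_one]
  ext i j
  simp only [Matrix.sub_apply, Matrix.add_apply, kroneckerMap_apply, mul_sub, sub_mul]
  ring

theorem eq_zero_of_commute_diagonal [NoZeroDivisors R] {M : Matrix n n R} {d : n → R}
    (h : Commute M (diagonal d)) {i j : n} (hij : d i ≠ d j) : M i j = 0 := by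
  have hentry := congrFun₂ h.eq i j
  rw [mul_diagonal, diagonal_mul] at hentry
  exact (mul_eq_zero.mp (by linear_combination hentry : M i j * (d j - d i) = 0)).resolve_right
    (sub_ne_zero.mpr hij.symm)

end CommRing

end Matrix

theorem pauli_commutator : σ1 * σ2 - σ2 * σ1 = (2 * Complex.I) • σ3 := by
  ext i j; fin_cases i <;> fin_cases j <;> norm_num [σ1, σ2, σ3, two_mul, sub_eq_add_neg]

theorem σ3_eq_diagonal : σ3 = diagonal ![1, -1] := by
  ext i j; fin_cases i <;> fin_cases j <;> simp [σ3]

theorem pauli_exchange : σ1 ⊗ₖ σ1 + σ2 ⊗ₖ σ2 + σ3 ⊗ₖ σ3 = (2 : ℂ) • flipMatrix - 1 := by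
  ext ⟨i, j⟩ ⟨k, l⟩
  fin_cases i <;> fin_cases j <;> fin_cases k <;> fin_cases l <;>
    norm_num [σ1, σ2, σ3, flipMatrix_apply, one_apply]

theorem commute_kroneckerSum_σ3 {M : Matrix (Fin 2 × Fin 2) (Fin 2 × Fin 2) ℂ}
    (h1 : Commute M (kroneckerSum σ1)) (h2 : Commute M (kroneckerSum σ2)) :
    Commute M (kroneckerSum σ3) := by
  have h : kroneckerSum σ3 = (2 * Complex.I)⁻¹ •
      (kroneckerSum σ1 * kroneckerSum σ2 - kroneckerSum σ2 * kroneckerSum σ1) := by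
    rw [kroneckerSum_commutator, pauli_commutator, kroneckerSum, kroneckerSum, kronecker_smul,
      smul_kronecker, ← smul_add, smul_smul, inv_mul_cancel₀ (by simp), one_smul]
  rw [h]
  exact ((h1.mul_right h2).sub_right (h2.mul_right h1)).smul_right _

theorem eq_smul_one_add_smul_flipMatrix_of_commute
    {M : Matrix (Fin 2 × Fin 2) (Fin 2 × Fin 2) ℂ}
    (h1 : Commute M (kroneckerSum σ1)) (h3 : Commute M (kroneckerSum σ3)) :
    M = (M (0, 0) (0, 0) - M (0, 1) (1, 0)) • 1 + M (0, 1) (1, 0) • flipMatrix := by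
  rw [σ3_eq_diagonal, kroneckerSum_diagonal] at h3
  have hz := fun i j => eq_zero_of_commute_diagonal h3 (i := i) (j := j)
  have h1_entries := fun i j => congrFun₂ h1.eq i j
  simp (disch := norm_num) only [kroneckerSum, σ1, mul_apply, Matrix.add_apply, kroneckerMap_apply,
    one_apply, of_apply, cons_val', cons_val_fin_one, ite_mul, one_mul, zero_mul, mul_ite, mul_one,
    mul_zero, Fintype.sum_prod_type, Fin.sum_univ_two, Fin.isValue, cons_val_zero, cons_val_one,
    Prod.forall, Fin.forall_fin_two, ite_self, ↓reduceIte, zero_add, one_ne_zero, add_zero,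
    zero_ne_one, hz] at h1_entries
  ext ⟨i, j⟩ ⟨k, l⟩
  fin_cases i <;> fin_cases j <;> fin_cases k <;> fin_cases l <;>
    simp (disch := norm_num) [flipMatrix_apply, one_apply, hz] <;> grind

theorem commutant_of_two_Vplus :
    {M : Matrix (Fin 2 × Fin 2) (Fin 2 × Fin 2) ℂ |
      M * (I2 ⊗ₖ σ1 + σ1 ⊗ₖ I2) = (I2 ⊗ₖ σ1 + σ1 ⊗ₖ I2) * M ∧
      M * (I2 ⊗ₖ σ2 + σ2 ⊗ₖ I2) = (I2 ⊗ₖ σ2 + σ2 ⊗ₖ I2) * M} =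
    ↑(Submodule.span ℂ
      ({I2 ⊗ₖ I2, σ1 ⊗ₖ σ1 + σ2 ⊗ₖ σ2 + σ3 ⊗ₖ σ3} :
        Set (Matrix (Fin 2 × Fin 2) (Fin 2 × Fin 2) ℂ))) := by
  ext M
  simp only [Set.mem_ofPred_eq, SetLike.mem_coe, Submodule.mem_span_pair, pauli_exchange, I2,
    one_kronecker_one]
  change Commute M (kroneckerSum σ1) ∧ Commute M (kroneckerSum σ2) ↔ _
  constructor
  · rintro ⟨h1, h2⟩
    rw [eq_smul_one_add_smul_flipMatrix_of_commute h1 (commute_kroneckerSum_σ3 h1 h2)]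
    exact ⟨M (0, 0) (0, 0) - M (0, 1) (1, 0) / 2, M (0, 1) (1, 0) / 2, by module⟩
  · rintro ⟨a, b, rfl⟩
    have hcomm (A : Matrix (Fin 2) (Fin 2) ℂ) :
        Commute (a • 1 + b • ((2 : ℂ) • flipMatrix - 1)) (kroneckerSum A) :=
      ((Commute.one_left _).smul_left a).add_left <|
        (((commute_flipMatrix_kroneckerSum A).smul_left 2).sub_left (Commute.one_left _)).smul_left b
    exact ⟨hcomm σ1, hcomm σ2⟩
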